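/- Let b ≥ 1 and 0 < m ≤ M, and set p₁ = m^{2^b/(2^b+1)} · M^{1/(2^b+1)}. For every price sequence σ of length n ≥ 1 with all prices in [m, M], if max_k σ k < p₁, then max_k σ k ≤ (M/m)^{1/(2^b+1)} · profit(RPP(p₁), σ). -/

import Mathlib

/-- The maximum price of a price sequence of positive length. -/
noncomputable def maxPrice {n : ℕ} (hn : 0 < n) (σ : Fin n → ℝ) : ℝ :=
  Finset.univ.sup' ⟨⟨0, hn⟩, Finset.mem_univ _⟩ σ

/-- The profit of the reservation-price strategy `RPP p` on the price sequence
`σ`: it accepts at the least index `k` with `σ k ≥ p`, obtaining `σ k`; if no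
such index exists it must accept the last price `σ (n-1)`. -/
noncomputable def rppProfit {n : ℕ} (hn : 0 < n) (p : ℝ) (σ : Fin n → ℝ) : ℝ :=
  if h : ∃ k : Fin n, p ≤ σ k then
    σ ((Finset.univ.filter (fun k : Fin n => p ≤ σ k)).min'
      (h.imp fun k hk => Finset.mem_filter.mpr ⟨Finset.mem_univ _, hk⟩))
  else σ ⟨n - 1, Nat.sub_lt hn one_pos⟩

/-! No price reaches `p₁`, so `RPP(p₁)` is forced to take the last price, which is at least `m`,
while `p₁ = (M/m)^{1/(2^b+1)} · m`. -/

lemma le_maxPrice {n : ℕ} (hn : 0 < n) (σ : Fin n → ℝ) (k : Fin n) : σ k ≤ maxPrice hn σ :=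
  Finset.le_sup' σ (Finset.mem_univ k)

lemma rppProfit_of_forall_lt {n : ℕ} (hn : 0 < n) {p : ℝ} {σ : Fin n → ℝ}
    (h : ∀ k, σ k < p) : rppProfit hn p σ = σ ⟨n - 1, Nat.sub_lt hn one_pos⟩ := by
  have hnone : ¬ ∃ k, p ≤ σ k := fun ⟨k, hk⟩ => (h k).not_ge hk
  rw [rppProfit, dif_neg hnone]

lemma rppProfit_of_maxPrice_lt {n : ℕ} (hn : 0 < n) {p : ℝ} {σ : Fin n → ℝ}
    (h : maxPrice hn σ < p) : rppProfit hn p σ = σ ⟨n - 1, Nat.sub_lt hn one_pos⟩ :=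
  rppProfit_of_forall_lt hn fun k => (le_maxPrice hn σ k).trans_lt h

lemma Real.rpow_one_sub_mul_rpow {m M : ℝ} (hm : 0 < m) (hM : 0 ≤ M) (t : ℝ) :
    m ^ (1 - t) * M ^ t = (M / m) ^ t * m := by
  rw [Real.rpow_sub hm, Real.rpow_one, Real.div_rpow hM hm.le]
  field_simp

lemma div_add_one_eq_one_sub {K : Type*} [Field K] {a : K} (ha : a + 1 ≠ 0) :
    a / (a + 1) = 1 - 1 / (a + 1) := by
  field_simp
  ring

theorem rpp_competitive_below_first_reservation_price_general
    (b : ℕ) (m M : ℝ) (hm : 0 < m) (hmM : m ≤ M)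
    (n : ℕ) (hn : 0 < n) (σ : Fin n → ℝ) (hσ : ∀ i, m ≤ σ i ∧ σ i ≤ M)
    (hmax : maxPrice hn σ < m ^ ((2 : ℝ) ^ b / (2 ^ b + 1)) * M ^ ((1 : ℝ) / (2 ^ b + 1))) :
    maxPrice hn σ ≤ (M / m) ^ ((1 : ℝ) / (2 ^ b + 1)) *
      rppProfit hn (m ^ ((2 : ℝ) ^ b / (2 ^ b + 1)) * M ^ ((1 : ℝ) / (2 ^ b + 1))) σ := by
  have hM : 0 ≤ M := hm.le.trans hmM
  have hp₁ : m ^ ((2 : ℝ) ^ b / (2 ^ b + 1)) * M ^ ((1 : ℝ) / (2 ^ b + 1))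
      = (M / m) ^ ((1 : ℝ) / (2 ^ b + 1)) * m := by
    rw [div_add_one_eq_one_sub (by positivity), Real.rpow_one_sub_mul_rpow hm hM]
  rw [rppProfit_of_maxPrice_lt hn hmax]
  calc maxPrice hn σ ≤ (M / m) ^ ((1 : ℝ) / (2 ^ b + 1)) * m := hp₁ ▸ hmax.le
    _ ≤ _ := mul_le_mul_of_nonneg_left (hσ _).1 (Real.rpow_nonneg (div_nonneg hM hm.le) _)

/-- (First case of the upper-bound proof.) With
`p₁ = m^{2^b/(2^b+1)} M^{1/(2^b+1)}`, if the maximum price of `σ` is below `p₁`,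
then `RPP(p₁)` is `(M/m)^{1/(2^b+1)}`-competitive on `σ`. -/
theorem rpp_competitive_below_first_reservation_price
    (b : ℕ) (hb : 1 ≤ b) (m M : ℝ) (hm : 0 < m) (hmM : m ≤ M)
    (n : ℕ) (hn : 0 < n) (σ : Fin n → ℝ) (hσ : ∀ i, m ≤ σ i ∧ σ i ≤ M)
    (hmax : maxPrice hn σ < m ^ ((2 : ℝ) ^ b / (2 ^ b + 1)) * M ^ ((1 : ℝ) / (2 ^ b + 1))) :
    maxPrice hn σ ≤ (M / m) ^ ((1 : ℝ) / (2 ^ b + 1)) *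
      rppProfit hn (m ^ ((2 : ℝ) ^ b / (2 ^ b + 1)) * M ^ ((1 : ℝ) / (2 ^ b + 1))) σ :=
  rpp_competitive_below_first_reservation_price_general b m M hm hmM n hn σ hσ hmax
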